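/- arXiv:2302.02725 — 2 statements merged into one kernel-verified Lean document; each statement's English description precedes it below -/
import Mathlib

section
/- Let r ≥ 1 and let c₁, …, c_r ∈ 𝔽_L with Σ_{i∈S} c_i ≠ 0 for every nonempty subset S ⊆ {1,…,r}. Let f_i = c₁x₁^i + c₂x₂^i + ⋯ + c_r x_r^i for 1 ≤ i ≤ r. Then the only common zero of f₁, …, f_r in 𝔽̄_L^r is the origin; equivalently, the projective variety V(f₁,…,f_r) is empty (the affine variety has dimension 0). -/
open scoped BigOperators

open Polynomial

/-- If every nonempty subsum of the `c_i` is nonzero, then the only common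
zero (over an algebraically closed field) of the forms
`f_i = c₁x₁^i + ⋯ + c_r x_r^i`, `1 ≤ i ≤ r`, is the origin. -/
theorem stmt_14 (F : Type*) [Field F] [IsAlgClosed F] (r : ℕ) (hr : 1 ≤ r)
    (c : Fin r → F)
    (hc : ∀ S : Finset (Fin r), S.Nonempty → (∑ i ∈ S, c i) ≠ 0)
    (x : Fin r → F)
    (hx : ∀ j : Fin r, (∑ i, c i * x i ^ ((j : ℕ) + 1)) = 0) :
    x = 0 := by
  classical
  by_contra hne
  obtain ⟨i₀, hi₀⟩ : ∃ i, x i ≠ 0 := by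
    by_contra h
    push_neg at h
    exact hne (funext fun i => h i)
  set v₀ := x i₀ with hv₀
  set T : Finset F := (Finset.univ.image x).erase 0 with hT
  have hv₀T : v₀ ∈ T :=
    Finset.mem_erase.mpr ⟨hi₀, Finset.mem_image_of_mem x (Finset.mem_univ i₀)⟩
  set q : F[X] := ∏ v ∈ T.erase v₀, (X - C v) with hq
  set p : F[X] := X * q with hp
  have hq0 : q ≠ 0 :=
    Finset.prod_ne_zero_iff.mpr fun v _ => X_sub_C_ne_zero v
  have hqdeg : q.natDegree = (T.erase v₀).card := by
    rw [hq, natDegree_prod _ _ (fun v _ => X_sub_C_ne_zero v)]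
    simp [natDegree_X_sub_C]
  have hpdeg : p.natDegree ≤ r := by
    rw [hp, natDegree_mul X_ne_zero hq0, natDegree_X, hqdeg]
    have h1 : (T.erase v₀).card < T.card := Finset.card_erase_lt_of_mem hv₀T
    have h2 : T.card ≤ r := by
      calc T.card ≤ (Finset.univ.image x).card := Finset.card_erase_le
        _ ≤ (Finset.univ : Finset (Fin r)).card := Finset.card_image_le
        _ = r := by simp
    omega
  have hcoeff0 : p.coeff 0 = 0 := by
    rw [Polynomial.coeff_zero_eq_eval_zero]
    simp [hp]
  have hsum : ∑ i, c i * p.eval (x i) = 0 := by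
    have key : ∀ i, c i * p.eval (x i)
        = ∑ j ∈ Finset.range (p.natDegree + 1), p.coeff j * (c i * x i ^ j) := by
      intro i
      rw [Polynomial.eval_eq_sum_range, Finset.mul_sum]
      exact Finset.sum_congr rfl fun j _ => by ring
    rw [Finset.sum_congr rfl fun i _ => key i, Finset.sum_comm]
    apply Finset.sum_eq_zero
    intro j hj
    rcases Nat.eq_zero_or_pos j with h0 | h1
    · subst h0; simp [hcoeff0]
    · have hjr : j - 1 < r := by
        have := Finset.mem_range.mp hj
        omega
      have hxj := hx ⟨j - 1, hjr⟩
      simp only at hxj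
      rw [show j - 1 + 1 = j by omega] at hxj
      rw [← Finset.mul_sum, hxj, mul_zero]
  have heval : ∀ i, x i ≠ v₀ → p.eval (x i) = 0 := by
    intro i h
    by_cases h0 : x i = 0
    · simp [hp, h0]
    · have hxT : x i ∈ T.erase v₀ :=
        Finset.mem_erase.mpr ⟨h, Finset.mem_erase.mpr
          ⟨h0, Finset.mem_image_of_mem x (Finset.mem_univ i)⟩⟩
      rw [hp, hq]
      simp only [eval_mul, eval_prod, eval_sub, eval_X, eval_C]
      rw [Finset.prod_eq_zero hxT (by simp)]
      ring
  set A : Finset (Fin r) := Finset.univ.filter (fun i => x i = v₀) with hA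
  have hsum2 : ∑ i, c i * p.eval (x i) = (∑ i ∈ A, c i) * p.eval v₀ := by
    rw [Finset.sum_mul,
      ← Finset.sum_filter_add_sum_filter_not Finset.univ (fun i => x i = v₀)]
    have h2 : ∑ i ∈ Finset.univ.filter (fun i => ¬ x i = v₀), c i * p.eval (x i) = 0 :=
      Finset.sum_eq_zero fun i hi => by
        rw [heval i (Finset.mem_filter.mp hi).2, mul_zero]
    rw [h2, add_zero]
    exact Finset.sum_congr rfl fun i hi => by rw [(Finset.mem_filter.mp hi).2]
  have hpv₀ : p.eval v₀ ≠ 0 := by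
    rw [hp]
    simp only [eval_mul, eval_X]
    apply mul_ne_zero hi₀
    rw [hq]
    simp only [eval_prod, eval_sub, eval_X, eval_C]
    apply Finset.prod_ne_zero_iff.mpr
    intro v hv
    exact sub_ne_zero_of_ne (Ne.symm (Finset.mem_erase.mp hv).1)
  have hAne : A.Nonempty := ⟨i₀, by simp [hA, hv₀]⟩
  rw [hsum2] at hsum
  exact hc A hAne ((mul_eq_zero.mp hsum).resolve_right hpv₀)
end

section
/- Let G = SL₂(ℤ/mℤ)^r with all prime factors of m at least 5, and suppose H ≤ G is a subgroup such that (i) each coordinate projection H → SL₂(ℤ/mℤ) is surjective, and (ii) for each pair i < j, the projection of H to the (i,j)-coordinates is all of SL₂(ℤ/mℤ)². Then (for m prime) H = G. -/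
namespace Stmt18
open Matrix
open scoped commutatorElement
variable {F : Type*} [Field F]

abbrev SL2 (F : Type*) [CommRing F] := Matrix.SpecialLinearGroup (Fin 2) F

def E12 (t : F) : SL2 F := ⟨!![1, t; 0, 1], by simp [Matrix.det_fin_two_of]⟩
def E21 (t : F) : SL2 F := ⟨!![1, 0; t, 1], by simp [Matrix.det_fin_two_of]⟩
def D (a : Fˣ) : SL2 F := ⟨!![(a:F), 0; 0, ((a⁻¹ : Fˣ) : F)], by simp [Matrix.det_fin_two_of]⟩

lemma E12_mul (s t : F) : E12 s * E12 t = E12 (s + t) := by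
  apply Subtype.ext
  simp only [Matrix.SpecialLinearGroup.coe_mul]
  ext i j
  fin_cases i <;> fin_cases j <;> simp [E12, Matrix.mul_fin_two] <;> ring

lemma E21_mul (s t : F) : E21 s * E21 t = E21 (s + t) := by
  apply Subtype.ext
  simp only [Matrix.SpecialLinearGroup.coe_mul]
  ext i j
  fin_cases i <;> fin_cases j <;> simp [E21, Matrix.mul_fin_two] <;> ring

lemma E12_inv (t : F) : (E12 t)⁻¹ = E12 (-t) := by
  apply inv_eq_of_mul_eq_one_right
  rw [E12_mul]
  apply Subtype.ext
  ext i j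
  fin_cases i <;> fin_cases j <;> simp [E12, Matrix.one_fin_two]

lemma E21_inv (t : F) : (E21 t)⁻¹ = E21 (-t) := by
  apply inv_eq_of_mul_eq_one_right
  rw [E21_mul]
  apply Subtype.ext
  ext i j
  fin_cases i <;> fin_cases j <;> simp [E21, Matrix.one_fin_two]

lemma D_inv (a : Fˣ) : (D a)⁻¹ = D a⁻¹ := by
  apply inv_eq_of_mul_eq_one_right
  apply Subtype.ext
  simp only [Matrix.SpecialLinearGroup.coe_mul]
  ext i j
  fin_cases i <;> fin_cases j <;>
    simp [D, Matrix.mul_fin_two, Matrix.one_fin_two]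

lemma comm_D_E12 (a : Fˣ) (t : F) : ⁅D a, E12 t⁆ = E12 (((a:F)^2 - 1) * t) := by
  rw [commutatorElement_def, D_inv, E12_inv]
  apply Subtype.ext
  simp only [Matrix.SpecialLinearGroup.coe_mul]
  ext i j
  fin_cases i <;> fin_cases j <;>
    simp [D, E12, Matrix.mul_fin_two] <;> ring

lemma comm_D_E21 (a : Fˣ) (t : F) :
    ⁅D a, E21 t⁆ = E21 ((((a⁻¹ : Fˣ) : F)^2 - 1) * t) := by
  rw [commutatorElement_def, D_inv, E21_inv]
  apply Subtype.ext
  simp only [Matrix.SpecialLinearGroup.coe_mul]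
  ext i j
  fin_cases i <;> fin_cases j <;>
    simp [D, E21, Matrix.mul_fin_two] <;> ring



lemma decomp (g : SL2 F) (hc : (g : Matrix (Fin 2) (Fin 2) F) 1 0 ≠ 0) :
    g = E12 (((g : Matrix (Fin 2) (Fin 2) F) 0 0 - 1) / (g : Matrix (Fin 2) (Fin 2) F) 1 0) *
        E21 ((g : Matrix (Fin 2) (Fin 2) F) 1 0) *
        E12 (((g : Matrix (Fin 2) (Fin 2) F) 1 1 - 1) / (g : Matrix (Fin 2) (Fin 2) F) 1 0) := by
  have hdet : (g : Matrix (Fin 2) (Fin 2) F).det = 1 := g.2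
  rw [Matrix.det_fin_two] at hdet
  apply Subtype.ext
  simp only [Matrix.SpecialLinearGroup.coe_mul]
  ext i j
  fin_cases i <;> fin_cases j <;>
    simp [E12, E21, Matrix.mul_fin_two] <;> field_simp <;> first | linear_combination hdet | linear_combination (-1 : F) * hdet | linear_combination (2 : F) * hdet | linear_combination (-2 : F) * hdet | ring

lemma mem_closure_gen (g : SL2 F) :
    g ∈ Subgroup.closure (Set.range (E12 (F := F)) ∪ Set.range (E21 (F := F))) := by
  set S := Subgroup.closure (Set.range (E12 (F := F)) ∪ Set.range (E21 (F := F))) with hS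
  have hE12 : ∀ t : F, E12 t ∈ S := fun t =>
    Subgroup.subset_closure (Or.inl ⟨t, rfl⟩)
  have hE21 : ∀ t : F, E21 t ∈ S := fun t =>
    Subgroup.subset_closure (Or.inr ⟨t, rfl⟩)
  have key : ∀ h : SL2 F, (h : Matrix (Fin 2) (Fin 2) F) 1 0 ≠ 0 → h ∈ S := by
    intro h hc
    rw [decomp h hc]
    exact mul_mem (mul_mem (hE12 _) (hE21 _)) (hE12 _)
  by_cases hc : (g : Matrix (Fin 2) (Fin 2) F) 1 0 ≠ 0
  · exact key g hc
  · push_neg at hc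
    have hdet : (g : Matrix (Fin 2) (Fin 2) F).det = 1 := g.2
    rw [Matrix.det_fin_two] at hdet
    have hd : (g : Matrix (Fin 2) (Fin 2) F) 1 1 ≠ 0 := by
      intro h0; rw [hc, h0] at hdet; simp at hdet
    have h2 : ((g * E21 1 : SL2 F) : Matrix (Fin 2) (Fin 2) F) 1 0 ≠ 0 := by
      have : ((g * E21 1 : SL2 F) : Matrix (Fin 2) (Fin 2) F) 1 0
          = (g : Matrix (Fin 2) (Fin 2) F) 1 0 + (g : Matrix (Fin 2) (Fin 2) F) 1 1 := by
        rw [Matrix.SpecialLinearGroup.coe_mul]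
        simp [E21, Matrix.mul_apply, Fin.sum_univ_two]
      rw [this, hc, zero_add]; exact hd
    have : g * E21 1 ∈ S := key _ h2
    have := mul_mem this (inv_mem (hE21 1))
    simpa using this


lemma main_induction {G : Type*} [Group G] (hperf : commutator G = ⊤) :
    ∀ (r : ℕ) (H : Subgroup (Fin r → G)),
      (∀ i g, ∃ h ∈ H, h i = g) →
      (∀ i j, i ≠ j → ∀ g₁ g₂ : G, ∃ h ∈ H, h i = g₁ ∧ h j = g₂) →
      H = ⊤ := by
  intro r
  induction r with
  | zero =>
    intro H _ _
    rw [Subgroup.eq_top_iff']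
    intro x
    have hx : x = 1 := funext fun i => i.elim0
    rw [hx]; exact one_mem H
  | succ r ih =>
    intro H hproj hpair
    set π : (Fin (r + 1) → G) →* (Fin r → G) :=
      { toFun := fun x i => x i.castSucc
        map_one' := rfl
        map_mul' := fun _ _ => rfl } with hπdef
    have hsurj : ∀ x : Fin r → G, ∃ h ∈ H, π h = x := by
      have htop : H.map π = ⊤ := by
        apply ih (H.map π)
        · intro i g
          obtain ⟨h, hH, he⟩ := hproj i.castSucc g
          exact ⟨π h, Subgroup.mem_map_of_mem π hH, he⟩
        · intro i j hij g₁ g₂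
          obtain ⟨h, hH, h1, h2⟩ := hpair i.castSucc j.castSucc
            (fun e => hij (Fin.castSucc_injective _ e)) g₁ g₂
          exact ⟨π h, Subgroup.mem_map_of_mem π hH, h1, h2⟩
      intro x
      have hx : x ∈ H.map π := htop ▸ Subgroup.mem_top x
      obtain ⟨h, hH, he⟩ := hx
      exact ⟨h, hH, he⟩
    set N : Subgroup G :=
      Subgroup.map (Pi.evalMonoidHom (fun _ : Fin (r + 1) => G) (Fin.last r))
        (H ⊓ π.ker) with hNdef
    have hNmem : ∀ g : G, g ∈ N ↔ ∃ h, h ∈ H ∧ π h = 1 ∧ h (Fin.last r) = g := by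
      intro g
      simp only [hNdef, Subgroup.mem_map, Subgroup.mem_inf, MonoidHom.mem_ker,
        Pi.evalMonoidHom_apply, and_assoc]
    haveI hNnormal : N.Normal := by
      constructor
      intro n hn g
      obtain ⟨h, hH, hker, hlast⟩ := (hNmem n).mp hn
      obtain ⟨k, hkH, hkl⟩ := hproj (Fin.last r) g
      refine (hNmem _).mpr ⟨k * h * k⁻¹, mul_mem (mul_mem hkH hH) (inv_mem hkH), ?_, ?_⟩
      · rw [_root_.map_mul, _root_.map_mul, _root_.map_inv, hker, mul_one, mul_inv_cancel]
      · show k (Fin.last r) * h (Fin.last r) * (k (Fin.last r))⁻¹ = g * n * g⁻¹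
        rw [hkl, hlast]
    have qone : ∀ w : Fin (r + 1) → G, w ∈ H → π w = 1 →
        QuotientGroup.mk' N (w (Fin.last r)) = 1 := by
      intro w hw hker
      rw [QuotientGroup.mk'_apply, QuotientGroup.eq_one_iff]
      exact (hNmem _).mpr ⟨w, hw, hker, rfl⟩
    have central : ∀ (i : Fin r) (h : Fin (r + 1) → G), h ∈ H →
        (∀ m : Fin r, m ≠ i → h m.castSucc = 1) →
        ∀ b : G, Commute (QuotientGroup.mk' N (h (Fin.last r))) (QuotientGroup.mk' N b) := by
      intro i h hH hsupp b
      obtain ⟨k, hkH, hk1, hk2⟩ := hpair i.castSucc (Fin.last r) (Fin.castSucc_lt_last i).ne 1 b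
      rw [← commutatorElement_eq_one_iff_commute, ← hk2, ← map_commutatorElement]
      have heval : ⁅h (Fin.last r), k (Fin.last r)⁆ = (⁅h, k⁆ : Fin (r + 1) → G) (Fin.last r) := rfl
      rw [heval]
      have hmem : (⁅h, k⁆ : Fin (r + 1) → G) ∈ H := by
        rw [commutatorElement_def]
        exact mul_mem (mul_mem (mul_mem hH hkH) (inv_mem hH)) (inv_mem hkH)
      apply qone _ hmem
      funext m
      show ⁅h m.castSucc, k m.castSucc⁆ = 1
      by_cases hmi : m = i
      · subst hmi
        rw [hk1, commutatorElement_one_right]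
      · rw [hsupp m hmi, commutatorElement_one_left]
    have decomp' : ∀ (s : Finset (Fin r)) (h : Fin (r + 1) → G), h ∈ H →
        (∀ m : Fin r, m ∉ s → h m.castSucc = 1) →
        ∀ b : G, Commute (QuotientGroup.mk' N (h (Fin.last r))) (QuotientGroup.mk' N b) := by
      intro s
      induction s using Finset.induction_on with
      | empty =>
        intro h hH hsupp b
        have h1 : QuotientGroup.mk' N (h (Fin.last r)) = 1 :=
          qone h hH (funext fun m => hsupp m (Finset.notMem_empty m))
        rw [h1]
        exact Commute.one_left _
      | @insert i s hi ihs =>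
        intro h hH hsupp b
        obtain ⟨u, huH, hu⟩ := hsurj (Pi.mulSingle i (π h i))
        have hsingleu : ∀ m : Fin r, m ≠ i → u m.castSucc = 1 := by
          intro m hmi
          have := congrFun hu m
          rwa [Pi.mulSingle_apply, if_neg hmi] at this
        have h'H : u⁻¹ * h ∈ H := mul_mem (inv_mem huH) hH
        have hsupp' : ∀ m : Fin r, m ∉ s → (u⁻¹ * h) m.castSucc = 1 := by
          intro m hm
          by_cases hmi : m = i
          · subst hmi
            have hthis := congrFun hu m
            rw [Pi.mulSingle_apply, if_pos rfl] at hthis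
            show ((π u) m)⁻¹ * (π h) m = 1
            rw [hthis, inv_mul_cancel]
          · show (u m.castSucc)⁻¹ * h m.castSucc = 1
            rw [hsingleu m hmi, hsupp m (by simp [hmi, hm]), inv_one, one_mul]
        have hcomm_h' := ihs (u⁻¹ * h) h'H hsupp'
        have hsplit : QuotientGroup.mk' N (h (Fin.last r)) =
            QuotientGroup.mk' N (u (Fin.last r)) *
              QuotientGroup.mk' N ((u⁻¹ * h) (Fin.last r)) := by
          rw [← _root_.map_mul]
          congr 1
          show h (Fin.last r) = u (Fin.last r) * ((u (Fin.last r))⁻¹ * h (Fin.last r))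
          rw [mul_inv_cancel_left]
        rw [hsplit]
        exact (central i u huH hsingleu b).mul_left (hcomm_h' b)
    have hNcomm : ∀ a b : G, ⁅a, b⁆ ∈ N := by
      intro a b
      obtain ⟨h, hH, hhl⟩ := hproj (Fin.last r) a
      have hcom : Commute (QuotientGroup.mk' N a) (QuotientGroup.mk' N b) := by
        rw [← hhl]
        exact decomp' Finset.univ h hH (fun m hm => absurd (Finset.mem_univ m) hm) b
      have : QuotientGroup.mk' N ⁅a, b⁆ = 1 := by
        rw [map_commutatorElement]
        exact commutatorElement_eq_one_iff_commute.mpr hcom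
      rw [QuotientGroup.mk'_apply, QuotientGroup.eq_one_iff] at this
      exact this
    have hNtop : N = ⊤ := by
      rw [eq_top_iff, ← hperf, commutator_def]
      exact Subgroup.commutator_le.mpr fun g₁ _ g₂ _ => hNcomm g₁ g₂
    rw [Subgroup.eq_top_iff']
    intro g
    obtain ⟨h, hH, hπ⟩ := hsurj (π g)
    have hmem : (g * h⁻¹) (Fin.last r) ∈ N := hNtop ▸ Subgroup.mem_top _
    obtain ⟨w, hwH, hwker, hwlast⟩ := (hNmem _).mp hmem
    have hgw : g = w * h := by
      funext m
      induction m using Fin.lastCases with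
      | last =>
        show g (Fin.last r) = w (Fin.last r) * h (Fin.last r)
        rw [hwlast]
        show g (Fin.last r) = g (Fin.last r) * (h (Fin.last r))⁻¹ * h (Fin.last r)
        rw [inv_mul_cancel_right]
      | cast m =>
        show g m.castSucc = w m.castSucc * h m.castSucc
        have h1 : w m.castSucc = 1 := congrFun hwker m
        have h2 : h m.castSucc = g m.castSucc := congrFun hπ m
        rw [h1, one_mul, h2]
    rw [hgw]
    exact mul_mem hwH hH

lemma sl2_perfect {F : Type*} [Field F] (a : Fˣ) (ha : (a : F) ^ 2 ≠ 1) :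
    commutator (SL2 F) = ⊤ := by
  rw [eq_top_iff]
  have hgen : Subgroup.closure (Set.range (E12 (F := F)) ∪ Set.range (E21 (F := F))) = ⊤ :=
    (Subgroup.eq_top_iff' _).mpr fun g => mem_closure_gen g
  rw [← hgen]
  apply (Subgroup.closure_le _).mpr
  rintro x (⟨t, rfl⟩ | ⟨t, rfl⟩)
  · have h1 : (a : F) ^ 2 - 1 ≠ 0 := sub_ne_zero.mpr ha
    have : E12 t = ⁅D a, E12 (t / ((a : F) ^ 2 - 1))⁆ := by
      rw [comm_D_E12]
      congr 1
      rw [mul_comm]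
      exact (div_mul_cancel₀ t h1).symm
    rw [this, commutator_def]
    exact Subgroup.commutator_mem_commutator (Subgroup.mem_top _) (Subgroup.mem_top _)
  · have hainv : ((a⁻¹ : Fˣ) : F) ^ 2 ≠ 1 := by
      rw [Units.val_inv_eq_inv_val, inv_pow]
      intro h
      apply ha
      rw [← inv_inv ((a : F) ^ 2), h, inv_one]
    have h1 : ((a⁻¹ : Fˣ) : F) ^ 2 - 1 ≠ 0 := sub_ne_zero.mpr hainv
    have : E21 t = ⁅D a, E21 (t / (((a⁻¹ : Fˣ) : F) ^ 2 - 1))⁆ := by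
      rw [comm_D_E21]
      congr 1
      rw [mul_comm]
      exact (div_mul_cancel₀ t h1).symm
    rw [this, commutator_def]
    exact Subgroup.commutator_mem_commutator (Subgroup.mem_top _) (Subgroup.mem_top _)

end Stmt18

/-- Pairwise surjectivity implies surjectivity: for a prime `ℓ ≥ 5`, a
subgroup `H` of `SL₂(𝔽_ℓ)^r` whose coordinate projections are surjective and
whose projections onto every pair of coordinates are surjective is the whole
group. -/
theorem stmt_18 (ℓ : ℕ) (hℓ : ℓ.Prime) (h5 : 5 ≤ ℓ) (r : ℕ)
    (H : Subgroup (Fin r → Matrix.SpecialLinearGroup (Fin 2) (ZMod ℓ)))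
    (hproj : ∀ i : Fin r, ∀ g : Matrix.SpecialLinearGroup (Fin 2) (ZMod ℓ),
      ∃ h ∈ H, h i = g)
    (hpair : ∀ i j : Fin r, i ≠ j →
      ∀ g₁ g₂ : Matrix.SpecialLinearGroup (Fin 2) (ZMod ℓ),
        ∃ h ∈ H, h i = g₁ ∧ h j = g₂) :
    H = ⊤ := by
  haveI : Fact ℓ.Prime := ⟨hℓ⟩
  have h2 : (2 : ZMod ℓ) ≠ 0 := by
    have : ((2 : ℕ) : ZMod ℓ) ≠ 0 := by
      rw [Ne, ZMod.natCast_eq_zero_iff]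
      intro hdvd
      have := Nat.le_of_dvd (by norm_num) hdvd
      omega
    simpa using this
  have hu : IsUnit (2 : ZMod ℓ) := isUnit_iff_ne_zero.mpr h2
  have ha : ((hu.unit : (ZMod ℓ)ˣ) : ZMod ℓ) ^ 2 ≠ 1 := by
    rw [hu.unit_spec]
    intro heq
    have h3 : ((3 : ℕ) : ZMod ℓ) = 0 := by
      push_cast
      linear_combination heq
    rw [ZMod.natCast_eq_zero_iff] at h3
    have := Nat.le_of_dvd (by norm_num) h3
    omega
  exact Stmt18.main_induction (Stmt18.sl2_perfect hu.unit ha) r H hproj hpair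
end
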